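/- In the mixed logit model, define the differential response rate under a uniform price change r ≠ 0 as φ_{1,2} := (S_1(P̃)/S_2(P̃)) / (S_1(P)/S_2(P)), where P = P̃ + (r,r). If the data are generated by the model with |γ1| < 1, then φ_{1,2} > 1 implies γ1 > 0 and φ_{1,2} < 1 implies γ1 < 0. -/

import Mathlib

open MeasureTheory

/-- Conditional logit share of product 1 at prices (q1, q2). -/
noncomputable def s1 (a b γ0 γ1 q1 q2 μ : ℝ) : ℝ :=
  Real.exp (a - b * q1 + μ) /
    (1 + Real.exp (a - b * q1 + μ) + Real.exp (a - b * q2 + (γ0 + μ * γ1) + μ))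

/-- Conditional logit share of product 2 at prices (q1, q2). -/
noncomputable def s2 (a b γ0 γ1 q1 q2 μ : ℝ) : ℝ :=
  Real.exp (a - b * q2 + (γ0 + μ * γ1) + μ) /
    (1 + Real.exp (a - b * q1 + μ) + Real.exp (a - b * q2 + (γ0 + μ * γ1) + μ))

/-- Aggregate demand for product 1. -/
noncomputable def S1 (a b γ0 γ1 lo hi : ℝ) (f : ℝ → ℝ) (q1 q2 : ℝ) : ℝ :=
  ∫ μ in lo..hi, s1 a b γ0 γ1 q1 q2 μ * f μ

/-- Aggregate demand for product 2. -/
noncomputable def S2 (a b γ0 γ1 lo hi : ℝ) (f : ℝ → ℝ) (q1 q2 : ℝ) : ℝ :=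
  ∫ μ in lo..hi, s2 a b γ0 γ1 q1 q2 μ * f μ

/-!
Write `w_P = s2(P) · f`. Since `s1 = exp (b p2 - b p1 - γ0) · exp (-μ γ1) · s2`, the ratio `S1 / S2` at
prices `P` is a constant times the `w_P`-average of `exp (-μ γ1)`, and `φ` is the quotient of
two such averages. A uniform price rise `r` is the same as lowering the intercept `a` by `b r`, and
this multiplies `s2` by a factor that increases with `μ` (the inside-good mass grows with `μ` when
`γ1 ≥ -1`). So the raise tilts the weight towards large `μ`, and Chebyshev's correlation inequality
gives `φ ≤ 1` when `exp (-μ γ1)` is nondecreasing (`γ1 ≤ 0`) and `φ ≥ 1` when it is nonincreasing.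
-/

open Set intervalIntegral

section Chebyshev

variable {lo hi : ℝ} {h w₁ w₂ : ℝ → ℝ}

theorem intervalIntegral.mul_integral_le_of_kernel_nonneg (hlo : lo ≤ hi)
    (hw₁ : IntervalIntegrable w₁ volume lo hi)
    (hw₂ : IntervalIntegrable w₂ volume lo hi)
    (hhw₁ : IntervalIntegrable (fun μ => h μ * w₁ μ) volume lo hi)
    (hhw₂ : IntervalIntegrable (fun μ => h μ * w₂ μ) volume lo hi)
    (hK : ∀ μ ∈ Icc lo hi, ∀ ν ∈ Icc lo hi, 0 ≤ (h ν - h μ) * (w₁ μ * w₂ ν - w₁ ν * w₂ μ)) :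
    (∫ μ in lo..hi, h μ * w₁ μ) * (∫ μ in lo..hi, w₂ μ) ≤
      (∫ μ in lo..hi, w₁ μ) * ∫ μ in lo..hi, h μ * w₂ μ := by
  set A := ∫ μ in lo..hi, h μ * w₁ μ
  set B := ∫ μ in lo..hi, w₁ μ
  set C := ∫ μ in lo..hi, h μ * w₂ μ
  set D := ∫ μ in lo..hi, w₂ μ
  have inner (μ : ℝ) : (∫ ν in lo..hi, (h ν - h μ) * (w₁ μ * w₂ ν - w₁ ν * w₂ μ))
      = w₁ μ * C - w₂ μ * A - h μ * w₁ μ * D + h μ * w₂ μ * B := by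
    have expand : (fun ν => (h ν - h μ) * (w₁ μ * w₂ ν - w₁ ν * w₂ μ)) = fun ν =>
        w₁ μ * (h ν * w₂ ν) - w₂ μ * (h ν * w₁ ν) - h μ * w₁ μ * w₂ ν + h μ * w₂ μ * w₁ ν := by
      ext ν; ring
    rw [expand, integral_add (((hhw₂.const_mul _).sub (hhw₁.const_mul _)).sub (hw₂.const_mul _))
        (hw₁.const_mul _), integral_sub ((hhw₂.const_mul _).sub (hhw₁.const_mul _))
        (hw₂.const_mul _), integral_sub (hhw₂.const_mul _) (hhw₁.const_mul _),
      integral_const_mul, integral_const_mul, integral_const_mul, integral_const_mul]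
  have outer : (∫ μ in lo..hi, ∫ ν in lo..hi, (h ν - h μ) * (w₁ μ * w₂ ν - w₁ ν * w₂ μ))
      = 2 * (B * C - A * D) := by
    simp only [inner]
    rw [integral_add (((hw₁.mul_const _).sub (hw₂.mul_const _)).sub (hhw₁.mul_const _))
        (hhw₂.mul_const _), integral_sub ((hw₁.mul_const _).sub (hw₂.mul_const _))
        (hhw₁.mul_const _), integral_sub (hw₁.mul_const _) (hw₂.mul_const _),
      integral_mul_const, integral_mul_const, integral_mul_const, integral_mul_const]
    ring
  have : 0 ≤ (∫ μ in lo..hi, ∫ ν in lo..hi, (h ν - h μ) * (w₁ μ * w₂ ν - w₁ ν * w₂ μ)) :=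
    integral_nonneg hlo fun μ hμ => integral_nonneg hlo fun ν hν => hK μ hμ ν hν
  linarith

theorem MonotoneOn.integral_mul_mul_le_of_monotone_ratio (hlo : lo ≤ hi)
    (hh : MonotoneOn h (Icc lo hi))
    (hw : ∀ μ ∈ Icc lo hi, ∀ ν ∈ Icc lo hi, μ ≤ ν → w₁ ν * w₂ μ ≤ w₁ μ * w₂ ν)
    (hw₁ : IntervalIntegrable w₁ volume lo hi) (hw₂ : IntervalIntegrable w₂ volume lo hi)
    (hhw₁ : IntervalIntegrable (fun μ => h μ * w₁ μ) volume lo hi)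
    (hhw₂ : IntervalIntegrable (fun μ => h μ * w₂ μ) volume lo hi) :
    (∫ μ in lo..hi, h μ * w₁ μ) * (∫ μ in lo..hi, w₂ μ) ≤
      (∫ μ in lo..hi, w₁ μ) * ∫ μ in lo..hi, h μ * w₂ μ := by
  refine mul_integral_le_of_kernel_nonneg hlo hw₁ hw₂ hhw₁ hhw₂ fun μ hμ ν hν => ?_
  rcases le_total μ ν with hμν | hνμ
  · exact mul_nonneg (sub_nonneg.2 (hh hμ hν hμν)) (sub_nonneg.2 (hw μ hμ ν hν hμν))
  · exact mul_nonneg_of_nonpos_of_nonpos (sub_nonpos.2 (hh hν hμ hνμ))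
      (sub_nonpos.2 (hw ν hν μ hμ hνμ))

theorem AntitoneOn.integral_mul_mul_le_of_monotone_ratio (hlo : lo ≤ hi)
    (hh : AntitoneOn h (Icc lo hi))
    (hw : ∀ μ ∈ Icc lo hi, ∀ ν ∈ Icc lo hi, μ ≤ ν → w₁ ν * w₂ μ ≤ w₁ μ * w₂ ν)
    (hw₁ : IntervalIntegrable w₁ volume lo hi) (hw₂ : IntervalIntegrable w₂ volume lo hi)
    (hhw₁ : IntervalIntegrable (fun μ => h μ * w₁ μ) volume lo hi)
    (hhw₂ : IntervalIntegrable (fun μ => h μ * w₂ μ) volume lo hi) :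
    (∫ μ in lo..hi, w₁ μ) * (∫ μ in lo..hi, h μ * w₂ μ) ≤
      (∫ μ in lo..hi, h μ * w₁ μ) * ∫ μ in lo..hi, w₂ μ := by
  rw [mul_comm, mul_comm (∫ μ in lo..hi, h μ * w₁ μ)]
  refine mul_integral_le_of_kernel_nonneg hlo hw₂ hw₁ hhw₂ hhw₁ fun μ hμ ν hν => ?_
  rcases le_total μ ν with hμν | hνμ
  · exact mul_nonneg_of_nonpos_of_nonpos (sub_nonpos.2 (hh hμ hν hμν))
      (by linarith [hw μ hμ ν hν hμν])
  · exact mul_nonneg (sub_nonneg.2 (hh hν hμ hνμ)) (by linarith [hw ν hν μ hμ hνμ])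

end Chebyshev

theorem div_one_add_mul_cross_le {x x' u v y z : ℝ} (hx' : 0 < x') (hx : x' ≤ x) (hu : 0 ≤ u)
    (huv : u ≤ v) (hy : 0 ≤ y) (hz : 0 ≤ z) :
    x * z / (1 + x * v) * (x' * y / (1 + x' * u)) ≤
      x * y / (1 + x * u) * (x' * z / (1 + x' * v)) := by
  have hx0 : 0 < x := hx'.trans_le hx
  have hv : 0 ≤ v := hu.trans huv
  have hden (c w : ℝ) (hc : 0 < c) (hw : 0 ≤ w) : 0 < 1 + c * w := by positivity
  rw [div_mul_div_comm, div_mul_div_comm, div_le_div_iff₀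
    (mul_pos (hden x v hx0 hv) (hden x' u hx' hu)) (mul_pos (hden x u hx0 hu) (hden x' v hx' hv))]
  nlinarith [mul_nonneg (mul_nonneg (mul_nonneg hx0.le hx'.le) (mul_nonneg hy hz))
    (mul_nonneg (sub_nonneg.2 hx) (sub_nonneg.2 huv))]

section Logit

variable {a a' b γ0 γ1 q1 q2 lo hi r μ ν : ℝ} {f : ℝ → ℝ}

theorem s2_pos : 0 < s2 a b γ0 γ1 q1 q2 μ := by
  unfold s2; positivity

theorem s1_pos : 0 < s1 a b γ0 γ1 q1 q2 μ := by
  unfold s1; positivity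

theorem continuous_s2 : Continuous (s2 a b γ0 γ1 q1 q2) := by
  unfold s2
  exact Continuous.div (by fun_prop) (by fun_prop) fun _ => by positivity

theorem continuous_s1 : Continuous (s1 a b γ0 γ1 q1 q2) := by
  unfold s1
  exact Continuous.div (by fun_prop) (by fun_prop) fun _ => by positivity

theorem s1_add_add : s1 a b γ0 γ1 (q1 + r) (q2 + r) μ = s1 (a - b * r) b γ0 γ1 q1 q2 μ := by
  unfold s1; ring_nf

theorem s2_add_add : s2 a b γ0 γ1 (q1 + r) (q2 + r) μ = s2 (a - b * r) b γ0 γ1 q1 q2 μ := by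
  unfold s2; ring_nf

theorem S1_add_add :
    S1 a b γ0 γ1 lo hi f (q1 + r) (q2 + r) = S1 (a - b * r) b γ0 γ1 lo hi f q1 q2 := by
  simp only [S1, s1_add_add]

theorem S2_add_add :
    S2 a b γ0 γ1 lo hi f (q1 + r) (q2 + r) = S2 (a - b * r) b γ0 γ1 lo hi f q1 q2 := by
  simp only [S2, s2_add_add]

theorem s1_eq_mul_s2 : s1 a b γ0 γ1 q1 q2 μ =
    Real.exp (b * q2 - b * q1 - γ0) * (Real.exp (-(μ * γ1)) * s2 a b γ0 γ1 q1 q2 μ) := by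
  unfold s1 s2
  rw [show a - b * q1 + μ
      = (b * q2 - b * q1 - γ0) + (-(μ * γ1)) + (a - b * q2 + (γ0 + μ * γ1) + μ) by ring,
    Real.exp_add, Real.exp_add, mul_div_assoc, mul_assoc]

theorem S1_eq_mul_integral : S1 a b γ0 γ1 lo hi f q1 q2 =
    Real.exp (b * q2 - b * q1 - γ0) *
      ∫ μ in lo..hi, Real.exp (-(μ * γ1)) * (s2 a b γ0 γ1 q1 q2 μ * f μ) := by
  simp only [S1, s1_eq_mul_s2, mul_assoc, intervalIntegral.integral_const_mul]

theorem s2_mul_s2_le (ha : a' ≤ a) (hγ1 : -1 ≤ γ1) (hμν : μ ≤ ν) :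
    s2 a b γ0 γ1 q1 q2 ν * s2 a' b γ0 γ1 q1 q2 μ ≤
      s2 a b γ0 γ1 q1 q2 μ * s2 a' b γ0 γ1 q1 q2 ν := by
  set Y := fun μ => Real.exp (γ0 - b * q2 + (1 + γ1) * μ)
  set U := fun μ => Real.exp (μ - b * q1) + Y μ
  have hs2 (c μ : ℝ) : s2 c b γ0 γ1 q1 q2 μ = Real.exp c * Y μ / (1 + Real.exp c * U μ) := by
    simp only [s2, Y, U, mul_add, ← Real.exp_add]
    ring_nf
  have hU : U μ ≤ U ν := add_le_add (Real.exp_le_exp.2 (by linarith))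
    (Real.exp_le_exp.2 (by nlinarith))
  simp only [hs2]
  exact div_one_add_mul_cross_le (Real.exp_pos _) (Real.exp_le_exp.2 ha) (by positivity) hU
    (by positivity) (by positivity)

theorem integral_mul_pos_of_continuous {g : ℝ → ℝ} (hlo : lo < hi) (hg : Continuous g)
    (hgpos : ∀ μ, 0 < g μ) (hfc : ContinuousOn f (Icc lo hi)) (hf : ∀ μ ∈ Icc lo hi, 0 < f μ) :
    0 < ∫ μ in lo..hi, g μ * f μ :=
  intervalIntegral_pos_of_pos_on ((hg.continuousOn.mul hfc).intervalIntegrable_of_Icc hlo.le)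
    (fun μ hμ => mul_pos (hgpos μ) (hf μ (Ioo_subset_Icc_self hμ))) hlo

theorem S1_pos (hlo : lo < hi) (hfc : ContinuousOn f (Icc lo hi))
    (hf : ∀ μ ∈ Icc lo hi, 0 < f μ) : 0 < S1 a b γ0 γ1 lo hi f q1 q2 :=
  integral_mul_pos_of_continuous hlo continuous_s1 (fun _ => s1_pos) hfc hf

theorem S2_pos (hlo : lo < hi) (hfc : ContinuousOn f (Icc lo hi))
    (hf : ∀ μ ∈ Icc lo hi, 0 < f μ) : 0 < S2 a b γ0 γ1 lo hi f q1 q2 :=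
  integral_mul_pos_of_continuous hlo continuous_s2 (fun _ => s2_pos) hfc hf

theorem s2_mul_monotone_ratio (hf : ∀ μ ∈ Icc lo hi, 0 ≤ f μ) (ha : a' ≤ a) (hγ1 : -1 ≤ γ1) :
    ∀ μ ∈ Icc lo hi, ∀ ν ∈ Icc lo hi, μ ≤ ν →
      s2 a b γ0 γ1 q1 q2 ν * f ν * (s2 a' b γ0 γ1 q1 q2 μ * f μ) ≤
        s2 a b γ0 γ1 q1 q2 μ * f μ * (s2 a' b γ0 γ1 q1 q2 ν * f ν) := fun μ hμ ν hν hμν => by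
  linear_combination mul_le_mul_of_nonneg_right (s2_mul_s2_le (b := b) (γ0 := γ0) (q1 := q1)
    (q2 := q2) ha hγ1 hμν) (mul_nonneg (hf μ hμ) (hf ν hν))

theorem intervalIntegrable_s2_mul (hlo : lo ≤ hi) (hfc : ContinuousOn f (Icc lo hi)) :
    IntervalIntegrable (fun μ => s2 a b γ0 γ1 q1 q2 μ * f μ) volume lo hi :=
  (continuous_s2.continuousOn.mul hfc).intervalIntegrable_of_Icc hlo

theorem intervalIntegrable_exp_mul_s2_mul (hlo : lo ≤ hi) (hfc : ContinuousOn f (Icc lo hi)) :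
    IntervalIntegrable (fun μ => Real.exp (-(μ * γ1)) * (s2 a b γ0 γ1 q1 q2 μ * f μ))
      volume lo hi :=
  ((by fun_prop : Continuous fun μ => Real.exp (-(μ * γ1))).continuousOn.mul
    (continuous_s2.continuousOn.mul hfc)).intervalIntegrable_of_Icc hlo

theorem S1_mul_S2_le_of_nonpos (hlo : lo ≤ hi) (hfc : ContinuousOn f (Icc lo hi))
    (hf : ∀ μ ∈ Icc lo hi, 0 ≤ f μ) (ha : a' ≤ a) (hγ1 : -1 ≤ γ1) (hγ1' : γ1 ≤ 0) :
    S1 a b γ0 γ1 lo hi f q1 q2 * S2 a' b γ0 γ1 lo hi f q1 q2 ≤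
      S2 a b γ0 γ1 lo hi f q1 q2 * S1 a' b γ0 γ1 lo hi f q1 q2 := by
  rw [S1_eq_mul_integral, S1_eq_mul_integral, mul_assoc, mul_left_comm (S2 _ _ _ _ _ _ _ _ _)]
  refine mul_le_mul_of_nonneg_left ?_ (Real.exp_pos _).le
  exact MonotoneOn.integral_mul_mul_le_of_monotone_ratio hlo
    (fun μ _ ν _ hμν => Real.exp_le_exp.2 (by nlinarith)) (s2_mul_monotone_ratio hf ha hγ1)
    (intervalIntegrable_s2_mul hlo hfc) (intervalIntegrable_s2_mul hlo hfc)
    (intervalIntegrable_exp_mul_s2_mul hlo hfc) (intervalIntegrable_exp_mul_s2_mul hlo hfc)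

theorem S2_mul_S1_le_of_nonneg (hlo : lo ≤ hi) (hfc : ContinuousOn f (Icc lo hi))
    (hf : ∀ μ ∈ Icc lo hi, 0 ≤ f μ) (ha : a' ≤ a) (hγ1 : 0 ≤ γ1) :
    S2 a b γ0 γ1 lo hi f q1 q2 * S1 a' b γ0 γ1 lo hi f q1 q2 ≤
      S1 a b γ0 γ1 lo hi f q1 q2 * S2 a' b γ0 γ1 lo hi f q1 q2 := by
  rw [S1_eq_mul_integral, S1_eq_mul_integral, mul_assoc, mul_left_comm (S2 _ _ _ _ _ _ _ _ _)]
  refine mul_le_mul_of_nonneg_left ?_ (Real.exp_pos _).le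
  exact AntitoneOn.integral_mul_mul_le_of_monotone_ratio hlo
    (fun μ _ ν _ hμν => Real.exp_le_exp.2 (by nlinarith))
    (s2_mul_monotone_ratio hf ha (by linarith))
    (intervalIntegrable_s2_mul hlo hfc) (intervalIntegrable_s2_mul hlo hfc)
    (intervalIntegrable_exp_mul_s2_mul hlo hfc) (intervalIntegrable_exp_mul_s2_mul hlo hfc)

end Logit

theorem total_market_test_general (a b γ0 γ1 p1 p2 lo hi r : ℝ) (f : ℝ → ℝ)
    (hb : 0 < b) (hγ1 : |γ1| < 1) (hlo : lo < hi) (hr : 0 < r)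
    (hfc : ContinuousOn f (Set.Icc lo hi))
    (hfpos : ∀ μ ∈ Set.Icc lo hi, 0 < f μ) :
    ((S1 a b γ0 γ1 lo hi f p1 p2 / S2 a b γ0 γ1 lo hi f p1 p2)
        / (S1 a b γ0 γ1 lo hi f (p1 + r) (p2 + r) / S2 a b γ0 γ1 lo hi f (p1 + r) (p2 + r))
        > 1 → 0 < γ1) ∧
    ((S1 a b γ0 γ1 lo hi f p1 p2 / S2 a b γ0 γ1 lo hi f p1 p2)
        / (S1 a b γ0 γ1 lo hi f (p1 + r) (p2 + r) / S2 a b γ0 γ1 lo hi f (p1 + r) (p2 + r))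
        < 1 → γ1 < 0) := by
  have hshift : a - b * r ≤ a := sub_le_self a (mul_pos hb hr).le
  have hf : ∀ μ ∈ Icc lo hi, 0 ≤ f μ := fun μ hμ => (hfpos μ hμ).le
  have hden : 0 < S2 a b γ0 γ1 lo hi f p1 p2 * S1 (a - b * r) b γ0 γ1 lo hi f p1 p2 :=
    mul_pos (S2_pos hlo hfc hfpos) (S1_pos hlo hfc hfpos)
  rw [S1_add_add, S2_add_add, div_div_div_eq, gt_iff_lt, one_lt_div hden, div_lt_one hden]
  refine ⟨fun hφ => ?_, fun hφ => ?_⟩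
  · by_contra! hγ1'
    exact hφ.not_ge (S1_mul_S2_le_of_nonpos hlo.le hfc hf hshift (abs_lt.1 hγ1).1.le hγ1')
  · by_contra! hγ1'
    exact hφ.not_ge (S2_mul_S1_le_of_nonneg hlo.le hfc hf hshift hγ1')

/-- The differential response rate under a total-market test signs γ1. -/
theorem total_market_test (a b γ0 γ1 p1 p2 lo hi r : ℝ) (f : ℝ → ℝ)
    (hb : 0 < b) (hγ1 : |γ1| < 1) (hlo : lo < hi) (hr : 0 < r)
    (hfc : ContinuousOn f (Set.Icc lo hi))
    (hfpos : ∀ μ ∈ Set.Icc lo hi, 0 < f μ)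
    (hfint : ∫ x in lo..hi, f x = 1) :
    ((S1 a b γ0 γ1 lo hi f p1 p2 / S2 a b γ0 γ1 lo hi f p1 p2)
        / (S1 a b γ0 γ1 lo hi f (p1 + r) (p2 + r) / S2 a b γ0 γ1 lo hi f (p1 + r) (p2 + r))
        > 1 → 0 < γ1) ∧
    ((S1 a b γ0 γ1 lo hi f p1 p2 / S2 a b γ0 γ1 lo hi f p1 p2)
        / (S1 a b γ0 γ1 lo hi f (p1 + r) (p2 + r) / S2 a b γ0 γ1 lo hi f (p1 + r) (p2 + r))
        < 1 → γ1 < 0) :=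
  total_market_test_general a b γ0 γ1 p1 p2 lo hi r f hb hγ1 hlo hr hfc hfpos
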